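/- There exists a constant c > 0 such that for every Boolean function f : {0,1}^n → {0,1}, the energy complexity of f satisfies EC(f) ≤ (1/2)·D(f)² + c·D(f), where D(f) is the decision tree complexity of f. -/

import Mathlib

/-!
Fix a decision tree `T` of depth `D = D(f)`. Level by level we build *guards*: for every branch
`p` of length `j` a wire that is on exactly when the input follows `p`, so at most one guard per
level is on. From level `j` to `j + 1`, each guard is ANDed with the variable queried at the end
of its branch; the `∨` of these, over a balanced tree of depth `j`, is the variable queried on the
branch actually followed, and a single `¬`-gate of it, ANDed with every guard, gives the guards
of the branches turning left. Only gates along the active branch fire, so level `j` activates at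
most `j + 3` gates, and a final `∨`-tree over the guards of the `1`-leaves at most `D` more:
`∑_{j<D} (j + 3) + D = (D² + 7D)/2` in total.
-/

/-- A gate in a Boolean circuit over the standard basis `{∨₂, ∧₂, ¬}`:
input gates labelled by variables, constant gates, and `∧`/`∨`/`¬` gates
whose arguments are (indices of) earlier gates. -/
inductive Gate (n : ℕ) : Type where
  | input : Fin n → Gate n
  | const : Bool → Gate n
  | and : ℕ → ℕ → Gate n
  | or : ℕ → ℕ → Gate n
  | not : ℕ → Gate n
deriving DecidableEq

/-- The indices of the incoming gates of a gate. -/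
def Gate.deps {n : ℕ} : Gate n → List ℕ
  | .and a b => [a, b]
  | .or a b => [a, b]
  | .not a => [a]
  | _ => []

/-- Inner gates are the non-input (and non-constant) gates, i.e. `∧`, `∨`, `¬` gates. -/
def Gate.isInner {n : ℕ} : Gate n → Bool
  | .and _ _ => true
  | .or _ _ => true
  | .not _ => true
  | _ => false

/-- A Boolean circuit over the standard basis on `n` input variables: a sequence of
gates (topologically sorted, so each gate only takes earlier gates as inputs,
which makes the underlying graph acyclic) together with a designated output gate. -/
structure Circuit (n : ℕ) : Type where
  size : ℕ
  gates : Fin size → Gate n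
  out : Fin size
  wf : ∀ i : Fin size, ∀ j ∈ (gates i).deps, j < (i : ℕ)

/-- The Boolean value of gate `i` of circuit `C` under input `x`. -/
def Circuit.evalGate {n : ℕ} (C : Circuit n) (x : Fin n → Bool) (i : ℕ) (h : i < C.size) :
    Bool :=
  match hg : C.gates ⟨i, h⟩ with
  | .input j => x j
  | .const b => b
  | .not a =>
      have ha : a < i := C.wf ⟨i, h⟩ a (by rw [hg]; simp [Gate.deps])
      ! C.evalGate x a (ha.trans h)
  | .and a b =>
      have ha : a < i := C.wf ⟨i, h⟩ a (by rw [hg]; simp [Gate.deps])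
      have hb : b < i := C.wf ⟨i, h⟩ b (by rw [hg]; simp [Gate.deps])
      C.evalGate x a (ha.trans h) && C.evalGate x b (hb.trans h)
  | .or a b =>
      have ha : a < i := C.wf ⟨i, h⟩ a (by rw [hg]; simp [Gate.deps])
      have hb : b < i := C.wf ⟨i, h⟩ b (by rw [hg]; simp [Gate.deps])
      C.evalGate x a (ha.trans h) || C.evalGate x b (hb.trans h)
termination_by i

/-- The output of circuit `C` on input `x`. -/
def Circuit.output {n : ℕ} (C : Circuit n) (x : Fin n → Bool) : Bool :=
  C.evalGate x C.out C.out.isLt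

/-- `C` computes the Boolean function `f`. -/
def Circuit.Computes {n : ℕ} (C : Circuit n) (f : (Fin n → Bool) → Bool) : Prop :=
  ∀ x, C.output x = f x

/-- The number of activated inner gates of `C` under input `x`. -/
def Circuit.energyAt {n : ℕ} (C : Circuit n) (x : Fin n → Bool) : ℕ :=
  (Finset.univ.filter fun i : Fin C.size =>
    (C.gates i).isInner = true ∧ C.evalGate x i i.isLt = true).card

/-- The energy complexity `EC(C)` of a circuit `C`: the maximum number of
activated inner gates over all inputs. -/
def Circuit.energy {n : ℕ} (C : Circuit n) : ℕ :=
  Finset.univ.sup fun x : Fin n → Bool => C.energyAt x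

/-- The energy complexity `EC(f)` of a Boolean function `f`: the minimum of `EC(C)`
over all circuits `C` computing `f`. -/
noncomputable def EC {n : ℕ} (f : (Fin n → Bool) → Bool) : ℕ :=
  sInf {k | ∃ C : Circuit n, C.Computes f ∧ C.energy = k}

/-- A deterministic decision tree on `n` Boolean variables: internal nodes query a
variable (left child on `0`, right child on `1`) and leaves are labelled `0`/`1`. -/
inductive DTree (n : ℕ) : Type where
  | leaf : Bool → DTree n
  | node : Fin n → DTree n → DTree n → DTree n

/-- Evaluation of a decision tree on an input. -/
def DTree.eval {n : ℕ} : DTree n → (Fin n → Bool) → Bool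
  | .leaf b, _ => b
  | .node i t0 t1, x => if x i then t1.eval x else t0.eval x

/-- The depth of a decision tree (number of queries on a worst-case input). -/
def DTree.depth {n : ℕ} : DTree n → ℕ
  | .leaf _ => 0
  | .node _ t0 t1 => max t0.depth t1.depth + 1

/-- The decision tree complexity `D(f)`: the minimum depth of a decision tree
computing `f`. -/
noncomputable def Dcomp {n : ℕ} (f : (Fin n → Bool) → Bool) : ℕ :=
  sInf {k | ∃ T : DTree n, (∀ x, T.eval x = f x) ∧ T.depth = k}

namespace Gate

variable {n : ℕ}

def value (x : Fin n → Bool) (v : ℕ → Bool) : Gate n → Bool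
  | .input j => x j
  | .const b => b
  | .and a b => v a && v b
  | .or a b => v a || v b
  | .not a => !v a

lemma value_congr (x : Fin n → Bool) {v v' : ℕ → Bool} {g : Gate n}
    (h : ∀ d ∈ g.deps, v d = v' d) : g.value x v = g.value x v' := by
  cases g <;> simp_all [value, deps]

def mapDeps (f : ℕ → ℕ) : Gate n → Gate n
  | .input j => .input j
  | .const b => .const b
  | .and a b => .and (f a) (f b)
  | .or a b => .or (f a) (f b)
  | .not a => .not (f a)

@[simp]
lemma deps_mapDeps (f : ℕ → ℕ) (g : Gate n) : (g.mapDeps f).deps = g.deps.map f := by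
  cases g <;> rfl

@[simp]
lemma isInner_mapDeps (f : ℕ → ℕ) (g : Gate n) : (g.mapDeps f).isInner = g.isInner := by
  cases g <;> rfl

lemma value_mapDeps (x : Fin n → Bool) (v : ℕ → Bool) (f : ℕ → ℕ) (g : Gate n) :
    (g.mapDeps f).value x v = g.value x (v ∘ f) := by
  cases g <;> rfl

end Gate

section Netlist

variable {n : ℕ}

/-- Wire `i` of a netlist `L : List (Gate n)` is the gate `L[i]`; a reference to a wire that is
not strictly earlier reads as `false`. -/
def wireValues (x : Fin n → Bool) (L : List (Gate n)) : List Bool :=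
  L.foldl (fun vs g => vs ++ [g.value x fun d => vs.getD d false]) []

def val (x : Fin n → Bool) (L : List (Gate n)) (w : ℕ) : Bool :=
  (wireValues x L).getD w false

variable (x : Fin n → Bool)

lemma wireValues_append_singleton (L : List (Gate n)) (g : Gate n) :
    wireValues x (L ++ [g]) = wireValues x L ++ [g.value x (val x L)] :=
  List.foldl_append ..

@[simp]
lemma length_wireValues (L : List (Gate n)) : (wireValues x L).length = L.length := by
  induction L using List.reverseRecOn with
  | nil => rfl
  | append_singleton L g ih => simp [wireValues_append_singleton, ih]

lemma wireValues_prefix_append (L M : List (Gate n)) :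
    wireValues x L <+: wireValues x (L ++ M) := by
  induction M using List.reverseRecOn with
  | nil => simp
  | append_singleton M g ih =>
    rw [← List.append_assoc, wireValues_append_singleton]
    exact ih.trans (List.prefix_append _ _)

lemma val_append_of_lt {L : List (Gate n)} {w : ℕ} (M : List (Gate n)) (hw : w < L.length) :
    val x (L ++ M) w = val x L w := by
  obtain ⟨t, ht⟩ := wireValues_prefix_append x L M
  rw [val, val, ← ht, List.getD_append _ _ _ _ (by simpa using hw)]

lemma val_of_prefix {L L' : List (Gate n)} (h : L <+: L') {w : ℕ} (hw : w < L.length) :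
    val x L' w = val x L w := by
  obtain ⟨M, rfl⟩ := h
  exact val_append_of_lt x M hw

lemma val_of_length_le {L : List (Gate n)} {w : ℕ} (hw : L.length ≤ w) : val x L w = false :=
  List.getD_eq_default _ _ (by simpa using hw)

lemma val_append_singleton_length (L : List (Gate n)) (g : Gate n) :
    val x (L ++ [g]) L.length = g.value x (val x L) := by
  simp [val, wireValues_append_singleton, List.getD_eq_getElem?_getD]

lemma val_eq_value_take {L : List (Gate n)} {i : ℕ} (hi : i < L.length) :
    val x L i = L[i].value x (val x (L.take i)) := by
  have h := val_append_singleton_length x (L.take i) L[i]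
  rw [List.take_append_getElem, List.length_take_of_le hi.le] at h
  rw [← h, val_of_prefix x (List.take_prefix (i + 1) L)
    (by simp only [List.length_take]; omega)]

lemma val_take (L : List (Gate n)) (i w : ℕ) :
    val x (L.take i) w = if w < i then val x L w else false := by
  split_ifs with hw
  · rcases le_or_gt L.length w with hL | hL
    · rw [val_of_length_le x hL, val_of_length_le x (by simp only [List.length_take]; omega)]
    · exact (val_of_prefix x (List.take_prefix i L) (by simp only [List.length_take]; omega)).symm
  · exact val_of_length_le x (by simp only [List.length_take]; omega)

def energy (L : List (Gate n)) : ℕ :=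
  ∑ i ∈ Finset.range L.length, ((L.getD i (.const false)).isInner && val x L i).toNat

lemma energy_append_singleton (L : List (Gate n)) (g : Gate n) :
    energy x (L ++ [g]) = energy x L + (g.isInner && g.value x (val x L)).toNat := by
  rw [energy, List.length_append, List.length_singleton, Finset.sum_range_succ, energy,
    ← val_append_singleton_length]
  congr 1
  · refine Finset.sum_congr rfl fun i hi => ?_
    rw [Finset.mem_range] at hi
    rw [List.getD_append _ _ _ _ hi, val_append_of_lt x _ hi]
  · simp [List.getD_eq_getElem?_getD]

end Netlist

lemma Circuit.evalGate_eq_value {n : ℕ} (C : Circuit n) (x : Fin n → Bool) (i : ℕ)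
    (h : i < C.size) :
    C.evalGate x i h = (C.gates ⟨i, h⟩).value x
      fun d => if hd : d < C.size then C.evalGate x d hd else false := by
  rw [Circuit.evalGate.eq_def]
  have hlt : ∀ d ∈ (C.gates ⟨i, h⟩).deps, d < C.size := fun d hd => (C.wf _ d hd).trans h
  split <;> rename_i hg <;> simp only [hg, Gate.deps, List.mem_cons, List.not_mem_nil] at hlt <;>
    simp [hg, Gate.value, hlt]

section Compile

variable {n : ℕ}

/-- The circuit of a netlist: a constant-`false` gate `0` is prepended, wire `i` becomes gate
`i + 1`, and every reference that is not strictly earlier is sent to gate `0`, which is how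
`val` reads it. -/
def toCircuit (L : List (Gate n)) (o : ℕ) : Circuit n where
  size := L.length + 1
  gates := Fin.cases (.const false) fun i => L[i].mapDeps fun d => if d < i then d + 1 else 0
  out := ⟨if o < L.length then o + 1 else 0, by split <;> omega⟩
  wf := by
    intro i
    refine Fin.cases (by simp [Gate.deps]) (fun i => ?_) i
    simp only [Fin.cases_succ, Gate.deps_mapDeps, List.mem_map, Fin.val_succ]
    rintro _ ⟨d, -, rfl⟩
    split <;> omega

variable (L : List (Gate n)) (o : ℕ)

@[simp]
lemma size_toCircuit : (toCircuit L o).size = L.length + 1 := rfl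

lemma gates_toCircuit_succ (i : ℕ) (h : i + 1 < (toCircuit L o).size) :
    (toCircuit L o).gates ⟨i + 1, h⟩ =
      (L[i]'(by simpa using h)).mapDeps fun d => if d < i then d + 1 else 0 := rfl

variable (x : Fin n → Bool)

lemma evalGate_toCircuit_zero (h : 0 < (toCircuit L o).size) :
    (toCircuit L o).evalGate x 0 h = false := by
  rw [Circuit.evalGate_eq_value]
  rfl

lemma evalGate_toCircuit_succ (i : ℕ) (h : i + 1 < (toCircuit L o).size) :
    (toCircuit L o).evalGate x (i + 1) h = val x L i := by
  induction i using Nat.strong_induction_on with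
  | _ i ih =>
    have hi : i < L.length := by simpa using h
    rw [Circuit.evalGate_eq_value, gates_toCircuit_succ, val_eq_value_take x hi,
      Gate.value_mapDeps]
    congr 1
    funext d
    rw [val_take, Function.comp_apply]
    split_ifs with hd hd'
    · exact ih d hd _
    · simp only [size_toCircuit] at hd'; omega
    · exact evalGate_toCircuit_zero L o x _
    · rfl

lemma output_toCircuit : (toCircuit L o).output x = val x L o := by
  by_cases ho : o < L.length
  · have e : ((toCircuit L o).out : ℕ) = o + 1 := by simp [toCircuit, ho]
    simp only [Circuit.output, e, evalGate_toCircuit_succ]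
  · have e : ((toCircuit L o).out : ℕ) = 0 := by simp [toCircuit, ho]
    simp only [Circuit.output, e, evalGate_toCircuit_zero, val_of_length_le x (not_lt.mp ho)]

lemma energyAt_toCircuit : (toCircuit L o).energyAt x = energy x L := by
  rw [Circuit.energyAt, Finset.card_filter, energy, ← Fin.sum_univ_eq_sum_range]
  change ∑ i : Fin (L.length + 1), _ = _
  rw [Fin.sum_univ_succ]
  refine (zero_add _).trans (Finset.sum_congr rfl fun i _ => ?_)
  simp only [Fin.val_succ, evalGate_toCircuit_succ, List.getD_eq_getElem _ _ i.isLt]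
  change (if (L[i].mapDeps _).isInner = true ∧ _ then 1 else 0) = _
  simp only [Gate.isInner_mapDeps]
  cases L[i].isInner <;> cases val x L i <;> rfl

lemma EC_le_of_netlist {f : (Fin n → Bool) → Bool} (L : List (Gate n)) (o : ℕ)
    (hf : ∀ x, val x L o = f x) {k : ℕ} (hk : ∀ x, energy x L ≤ k) : EC f ≤ k :=
  calc EC f ≤ (toCircuit L o).energy :=
        Nat.sInf_le ⟨_, fun x => (output_toCircuit L o x).trans (hf x), rfl⟩
    _ ≤ k := Finset.sup_le fun x _ => (energyAt_toCircuit L o x).trans_le (hk x)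

end Compile

section Layer

variable {n : ℕ} (x : Fin n → Bool)

lemma val_append_length_add {L M : List (Gate n)} (hM : ∀ g ∈ M, ∀ d ∈ g.deps, d < L.length)
    {k : ℕ} (hk : k < M.length) :
    val x (L ++ M) (L.length + k) = M[k].value x (val x L) := by
  have hsplit : L ++ M = (L ++ M.take k ++ [M[k]]) ++ M.drop (k + 1) := by
    simp only [List.append_assoc, List.singleton_append, ← List.drop_eq_getElem_cons hk,
      List.take_append_drop]
  have hlen : (L ++ M.take k).length = L.length + k := by
    simp only [List.length_append, List.length_take]; omega
  rw [hsplit, val_append_of_lt x _ (by rw [List.length_append, hlen, List.length_singleton]; omega),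
    ← hlen, val_append_singleton_length]
  exact Gate.value_congr x fun d hd =>
    val_append_of_lt x _ (hM _ (List.getElem_mem hk) d hd)

lemma energy_append {L M : List (Gate n)} (hM : ∀ g ∈ M, ∀ d ∈ g.deps, d < L.length) :
    energy x (L ++ M) = energy x L + M.countP fun g => g.isInner && g.value x (val x L) := by
  induction M using List.reverseRecOn with
  | nil => simp
  | append_singleton M g ih =>
    have hg : g.value x (val x (L ++ M)) = g.value x (val x L) :=
      Gate.value_congr x fun d hd => val_append_of_lt x _ (hM g (by simp) d hd)
    rw [← List.append_assoc, energy_append_singleton, ih fun g' hg' => hM g' (by simp [hg']),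
      hg, List.countP_append, List.countP_singleton, add_assoc]
    cases g.isInner && g.value x (val x L) <;> rfl

variable {ι : Type*} [Fintype ι]

noncomputable def addLayer (G : ι → Gate n) (L : List (Gate n)) : List (Gate n) :=
  L ++ Finset.univ.toList.map G

lemma prefix_addLayer (G : ι → Gate n) (L : List (Gate n)) : L <+: addLayer G L :=
  List.prefix_append _ _

variable [DecidableEq ι]

noncomputable def layerWire (L : List (Gate n)) (i : ι) : ℕ :=
  L.length + Finset.univ.toList.idxOf i

variable {G : ι → Gate n} {L : List (Gate n)}

lemma idxOf_lt_length_toList (i : ι) :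
    (Finset.univ : Finset ι).toList.idxOf i < (Finset.univ : Finset ι).toList.length :=
  List.idxOf_lt_length_iff.mpr (Finset.mem_toList.mpr (Finset.mem_univ i))

lemma layerWire_lt_length (i : ι) : layerWire L i < (addLayer G L).length := by
  simpa [addLayer, layerWire] using idxOf_lt_length_toList i

lemma val_layerWire (hG : ∀ i, ∀ d ∈ (G i).deps, d < L.length) (i : ι) :
    val x (addLayer G L) (layerWire L i) = (G i).value x (val x L) := by
  have hi := idxOf_lt_length_toList i
  rw [addLayer, layerWire, val_append_length_add x (by simpa using fun j => hG j)
    (by simpa using hi), List.getElem_map, List.getElem_idxOf]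

lemma energy_addLayer_le_one (hG : ∀ i, ∀ d ∈ (G i).deps, d < L.length) (i₀ : ι)
    (h : ∀ i, (G i).value x (val x L) = true → i = i₀) :
    energy x (addLayer G L) ≤ energy x L + 1 := by
  rw [addLayer, energy_append x (by simpa using fun j => hG j), List.countP_map]
  gcongr
  calc _ ≤ Finset.univ.toList.count i₀ :=
        List.countP_mono_left fun i _ hi => by
          simpa using h i (Bool.and_elim_right hi)
    _ = 1 := List.count_eq_one_of_mem (Finset.nodup_toList _) (by simp)

end Layer

section ComputesAt

variable {n : ℕ}

def ComputesAt (L : List (Gate n)) (w : ℕ) (F : (Fin n → Bool) → Bool) : Prop :=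
  w < L.length ∧ ∀ x, val x L w = F x

lemma ComputesAt.mono {L L' : List (Gate n)} {w : ℕ} {F : (Fin n → Bool) → Bool}
    (h : ComputesAt L w F) (hL : L <+: L') : ComputesAt L' w F :=
  ⟨h.1.trans_le hL.length_le, fun x => (val_of_prefix x hL h.1).trans (h.2 x)⟩

lemma ComputesAt.congr {L : List (Gate n)} {w : ℕ} {F G : (Fin n → Bool) → Bool}
    (h : ComputesAt L w F) (hFG : ∀ x, F x = G x) : ComputesAt L w G :=
  ⟨h.1, fun x => (h.2 x).trans (hFG x)⟩

lemma computesAt_layerWire {ι : Type*} [Fintype ι] [DecidableEq ι] {G : ι → Gate n}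
    {L : List (Gate n)} {F : ι → (Fin n → Bool) → Bool}
    (hG : ∀ i, ∀ d ∈ (G i).deps, d < L.length) (hF : ∀ i x, (G i).value x (val x L) = F i x)
    (i : ι) : ComputesAt (addLayer G L) (layerWire L i) (F i) :=
  ⟨layerWire_lt_length i, fun x => (val_layerWire x hG i).trans (hF i x)⟩

end ComputesAt

section OrTree

variable {n : ℕ}

noncomputable def orTree :
    (k : ℕ) → ((Fin k → Bool) → ℕ) → List (Gate n) → List (Gate n) × ℕ
  | 0, w, L => (L, w default)
  | k + 1, w, L =>
    orTree k (layerWire L) (addLayer (fun p => .or (w (Fin.cons false p)) (w (Fin.cons true p))) L)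

lemma prefix_orTree (k : ℕ) (w : (Fin k → Bool) → ℕ) (L : List (Gate n)) :
    L <+: (orTree k w L).1 := by
  induction k generalizing L with
  | zero => exact List.prefix_rfl
  | succ k ih => exact (prefix_addLayer _ L).trans (ih _ _)

lemma computesAt_orTree {k : ℕ} {w : (Fin k → Bool) → ℕ} {L : List (Gate n)}
    {F : (Fin k → Bool) → (Fin n → Bool) → Bool} (hw : ∀ p, ComputesAt L (w p) (F p)) :
    ComputesAt (orTree k w L).1 (orTree k w L).2 fun x => decide (∃ p, F p x = true) := by
  induction k generalizing L with
  | zero =>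
    refine ⟨(hw default).1, fun x => ?_⟩
    change val x L (w default) = _
    rw [(hw default).2 x]
    simp only [Unique.exists_iff, Bool.decide_eq_true]
    exact congrArg (F · x) (Subsingleton.elim _ _)
  | succ k ih =>
    have h := ih (w := layerWire L)
      (F := fun p x => F (Fin.cons false p) x || F (Fin.cons true p) x)
      (computesAt_layerWire (G := fun p => .or (w (Fin.cons false p)) (w (Fin.cons true p)))
        (fun p => by simp [Gate.deps, (hw _).1])
        fun p x => by simp [Gate.value, (hw _).2 x])
    refine ⟨h.1, fun x => (h.2 x).trans ?_⟩
    simp [Fin.exists_fin_succ_pi, Bool.exists_bool, exists_or]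

/-- With at most one input on, only the `∨`-gates above it fire: one per level of the tree. -/
lemma energy_orTree_le (x : Fin n → Bool) {k : ℕ} {w : (Fin k → Bool) → ℕ}
    {L : List (Gate n)}
    (hw : ∀ p, w p < L.length) (p₀ : Fin k → Bool)
    (h : ∀ p, val x L (w p) = true → p = p₀) :
    energy x (orTree k w L).1 ≤ energy x L + k := by
  induction k generalizing L with
  | zero => simp [orTree]
  | succ k ih =>
    have hG : ∀ p, ∀ d ∈ (Gate.or (w (Fin.cons false p)) (w (Fin.cons true p)) : Gate n).deps,
        d < L.length := fun p => by simp [Gate.deps, hw]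
    have h_active : ∀ p, (Gate.or (w (Fin.cons false p)) (w (Fin.cons true p)) : Gate n).value x
        (val x L) = true → p = Fin.tail p₀ := by
      intro p hp
      obtain ⟨b, hb⟩ : ∃ b, val x L (w (Fin.cons b p)) = true := by
        simpa [Gate.value, Bool.exists_bool] using hp
      rw [← h _ hb, Fin.tail_cons]
    calc energy x (orTree (k + 1) w L).1
        ≤ energy x (addLayer _ L) + k :=
          ih (fun p => layerWire_lt_length p) (Fin.tail p₀)
            fun p hp => h_active p (by rwa [val_layerWire x hG] at hp)
      _ ≤ energy x L + (k + 1) := by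
          have := energy_addLayer_le_one x hG _ h_active
          omega

end OrTree

namespace DTree

variable {n : ℕ}

def child : DTree n → Bool → DTree n
  | .leaf c, _ => .leaf c
  | .node _ t₀ t₁, b => if b then t₁ else t₀

/-- The branch taken by `x` at the root; a leaf counts as a node with both children equal to
itself, reached on `false`. -/
def dir : DTree n → (Fin n → Bool) → Bool
  | .leaf _, _ => false
  | .node i _ _, x => x i

def label : DTree n → Bool
  | .leaf c => c
  | .node .. => false

lemma eval_child_dir (T : DTree n) (x : Fin n → Bool) :
    (T.child (T.dir x)).eval x = T.eval x := by
  cases T with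
  | leaf => rfl
  | node i t₀ t₁ => cases h : x i <;> simp [child, dir, eval, h]

lemma depth_child_le (T : DTree n) (b : Bool) : (T.child b).depth ≤ T.depth - 1 := by
  cases T with
  | leaf => simp [child, depth]
  | node i t₀ t₁ => cases b <;> simp [child, depth]

lemma eval_eq_label {T : DTree n} (h : T.depth = 0) (x : Fin n → Bool) : T.eval x = T.label := by
  cases T with
  | leaf => rfl
  | node => simp [depth] at h

/-- The subtree reached along the branch `p`, whose last step is `p 0`. -/
def sub (T : DTree n) : (j : ℕ) → (Fin j → Bool) → DTree n
  | 0, _ => T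
  | j + 1, p => (T.sub j (Fin.tail p)).child (p 0)

def path (T : DTree n) (x : Fin n → Bool) : (j : ℕ) → Fin j → Bool
  | 0 => Fin.elim0
  | j + 1 => Fin.cons ((T.sub j (T.path x j)).dir x) (T.path x j)

variable (T : DTree n)

lemma sub_succ_cons (j : ℕ) (b : Bool) (p : Fin j → Bool) :
    T.sub (j + 1) (Fin.cons b p) = (T.sub j p).child b := by
  simp [sub]

lemma eval_sub_path (x : Fin n → Bool) (j : ℕ) : (T.sub j (T.path x j)).eval x = T.eval x := by
  induction j with
  | zero => rfl
  | succ j ih => rw [path, sub_succ_cons, eval_child_dir, ih]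

lemma depth_sub_le (j : ℕ) (p : Fin j → Bool) : (T.sub j p).depth ≤ T.depth - j := by
  induction j with
  | zero => simp [sub]
  | succ j ih =>
    have := depth_child_le (T.sub j (Fin.tail p)) (p 0)
    have := ih (Fin.tail p)
    simp only [sub]
    omega

lemma path_succ_eq_cons_iff (x : Fin n → Bool) (j : ℕ) (b : Bool) (p : Fin j → Bool) :
    T.path x (j + 1) = Fin.cons b p ↔ T.path x j = p ∧ (T.sub j p).dir x = b := by
  rw [path, Fin.cons_inj]
  constructor
  · rintro ⟨hb, rfl⟩
    exact ⟨rfl, hb⟩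
  · rintro ⟨rfl, hb⟩
    exact ⟨hb, rfl⟩

end DTree

section BaseNetlist

variable {n : ℕ}

/-- Wire `0` carries `false`, wire `1` carries `true` and wire `i + 2` the variable `x i`. -/
def baseNetlist (n : ℕ) : List (Gate n) :=
  .const false :: .const true :: (List.finRange n).map .input

def DTree.queryWire : DTree n → ℕ
  | .leaf _ => 0
  | .node i _ _ => i + 2

lemma computesAt_baseNetlist_zero : ComputesAt (baseNetlist n) 0 fun _ => false :=
  ⟨by simp [baseNetlist], fun x => by rw [val_eq_value_take x (by simp [baseNetlist])]; rfl⟩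

lemma computesAt_baseNetlist_one : ComputesAt (baseNetlist n) 1 fun _ => true :=
  ⟨by simp [baseNetlist], fun x => by rw [val_eq_value_take x (by simp [baseNetlist])]; rfl⟩

lemma computesAt_queryWire (T : DTree n) : ComputesAt (baseNetlist n) T.queryWire T.dir := by
  cases T with
  | leaf => exact computesAt_baseNetlist_zero
  | node i t₀ t₁ =>
    have hi : i + 2 < (baseNetlist n).length := by simp [baseNetlist]
    refine ⟨hi, fun x => ?_⟩
    rw [DTree.queryWire, val_eq_value_take x hi]
    simp [baseNetlist, Gate.value, DTree.dir]

lemma energy_baseNetlist (x : Fin n → Bool) : energy x (baseNetlist n) = 0 := by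
  refine Finset.sum_eq_zero fun i hi => ?_
  rw [List.getD_eq_getElem _ _ (Finset.mem_range.mp hi)]
  rcases i with _ | _ | i <;> simp [baseNetlist, Gate.isInner]

end BaseNetlist

section Selects

variable {n : ℕ} {ι : Type*} [DecidableEq ι]

def Selects (L : List (Gate n)) (g : ι → ℕ) (π : (Fin n → Bool) → ι) : Prop :=
  ∀ i, ComputesAt L (g i) fun x => decide (π x = i)

lemma Selects.mono {L L' : List (Gate n)} {g : ι → ℕ} {π : (Fin n → Bool) → ι}
    (h : Selects L g π) (hL : L <+: L') : Selects L' g π :=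
  fun i => (h i).mono hL

variable [Fintype ι] {L : List (Gate n)} {g : ι → ℕ} {π : (Fin n → Bool) → ι}
  {q : ι → ℕ}

lemma computesAt_andLayer (hg : Selects L g π) {Q : ι → (Fin n → Bool) → Bool}
    (hq : ∀ i, ComputesAt L (q i) (Q i)) (i : ι) :
    ComputesAt (addLayer (fun i => .and (g i) (q i)) L) (layerWire L i)
      fun x => decide (π x = i) && Q i x :=
  computesAt_layerWire (G := fun i => .and (g i) (q i)) (F := fun i x => decide (π x = i) && Q i x)
    (fun i => by simp [Gate.deps, (hg i).1, (hq i).1])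
    (fun i x => by simp only [Gate.value, (hg i).2, (hq i).2]) i

/-- Only the gate of `π x` can fire. -/
lemma energy_andLayer_le_one (hg : Selects L g π) (hq : ∀ i, q i < L.length)
    (x : Fin n → Bool) :
    energy x (addLayer (fun i => .and (g i) (q i)) L) ≤ energy x L + 1 :=
  energy_addLayer_le_one x (fun i => by simp [Gate.deps, (hg i).1, hq i]) (π x)
    fun i hi => by
      simp only [Gate.value, (hg i).2, Bool.and_eq_true, decide_eq_true_eq] at hi
      exact hi.1.symm

end Selects

namespace DTree

variable {n : ℕ}

/-- The `∧`-gates are the guards of the branches extended by `true`. -/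
noncomputable def queryBit (T : DTree n) (j : ℕ) (g : (Fin j → Bool) → ℕ)
    (L : List (Gate n)) : List (Gate n) × ℕ :=
  orTree j (layerWire L) (addLayer (fun p => .and (g p) (T.sub j p).queryWire) L)

lemma queryBit_spec (T : DTree n) {j : ℕ} {g : (Fin j → Bool) → ℕ} {L : List (Gate n)}
    (hL : baseNetlist n <+: L) (hg : Selects L g (T.path · j)) :
    L <+: (T.queryBit j g L).1 ∧
      (∀ p, ComputesAt (T.queryBit j g L).1 (layerWire L p)
        fun x => decide (T.path x (j + 1) = Fin.cons true p)) ∧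
      ComputesAt (T.queryBit j g L).1 (T.queryBit j g L).2
        (fun x => (T.sub j (T.path x j)).dir x) ∧
      ∀ x, energy x (T.queryBit j g L).1 ≤ energy x L + (j + 1) := by
  set L₁ := addLayer (fun p => .and (g p) (T.sub j p).queryWire) L
  have hL₁ : L₁ <+: (T.queryBit j g L).1 := prefix_orTree j _ L₁
  have hq : ∀ p, ComputesAt L (T.sub j p).queryWire (T.sub j p).dir :=
    fun p => (computesAt_queryWire _).mono hL
  have hright : ∀ p, ComputesAt L₁ (layerWire L p)
      fun x => decide (T.path x (j + 1) = Fin.cons true p) :=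
    fun p => (computesAt_andLayer hg hq p).congr fun x => by simp [path_succ_eq_cons_iff]
  refine ⟨(prefix_addLayer _ L).trans hL₁, fun p => (hright p).mono hL₁,
    (computesAt_orTree hright).congr fun x => by simp [path, Fin.cons_inj], fun x => ?_⟩
  have e₁ : energy x L₁ ≤ energy x L + 1 := energy_andLayer_le_one hg (fun p => (hq p).1) x
  have e₂ : energy x (T.queryBit j g L).1 ≤ energy x L₁ + j :=
    energy_orTree_le x (fun p => (hright p).1) (T.path x j) fun p hp => by
      rw [(hright p).2 x, decide_eq_true_eq, path_succ_eq_cons_iff] at hp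
      exact hp.1.symm
  omega

/-- The guards of the branches extended by `false` AND the old guards with the negation of
`queryBit`, taken by one shared `¬`-gate: a `¬`-gate per branch would fire on most branches. -/
noncomputable def step (T : DTree n) (j : ℕ) (g : (Fin j → Bool) → ℕ) (L : List (Gate n)) :
    List (Gate n) × ((Fin (j + 1) → Bool) → ℕ) :=
  let t := T.queryBit j g L
  let L' := addLayer (fun _ : Unit => .not t.2) t.1
  (addLayer (fun p => .and (g p) (layerWire t.1 ())) L',
    fun p => if p 0 then layerWire L (Fin.tail p) else layerWire L' (Fin.tail p))

lemma step_spec (T : DTree n) {j : ℕ} {g : (Fin j → Bool) → ℕ} {L : List (Gate n)}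
    (hL : baseNetlist n <+: L) (hg : Selects L g (T.path · j)) :
    L <+: (T.step j g L).1 ∧ Selects (T.step j g L).1 (T.step j g L).2 (T.path · (j + 1)) ∧
      ∀ x, energy x (T.step j g L).1 ≤ energy x L + (j + 3) := by
  obtain ⟨hpre, hright, hbit, henergy⟩ := T.queryBit_spec hL hg
  set t := T.queryBit j g L
  set L' := addLayer (fun _ : Unit => .not t.2) t.1
  set L'' := addLayer (fun p => .and (g p) (layerWire t.1 ())) L'
  have hL' : t.1 <+: L'' := (prefix_addLayer _ t.1).trans (prefix_addLayer _ L')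
  have hG : ∀ _ : Unit, ∀ d ∈ (Gate.not t.2 : Gate n).deps, d < t.1.length := by
    simp [Gate.deps, hbit.1]
  have hnot : ComputesAt L' (layerWire t.1 ()) fun x => !(T.sub j (T.path x j)).dir x :=
    computesAt_layerWire (F := fun _ x => !(T.sub j (T.path x j)).dir x) hG
      (fun _ x => by simp [Gate.value, hbit.2 x]) ()
  have hg' : Selects L' g (T.path · j) := hg.mono (hpre.trans (prefix_addLayer _ t.1))
  have hleft : ∀ p, ComputesAt L'' (layerWire L' p)
      fun x => decide (T.path x (j + 1) = Fin.cons false p) := by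
    refine fun p => (computesAt_andLayer hg' (fun _ => hnot) p).congr fun x => ?_
    by_cases hp : T.path x j = p
    · subst hp
      simp [path_succ_eq_cons_iff]
    · simp [path_succ_eq_cons_iff, hp]
  have hsel : Selects L''
      (fun p => if p 0 then layerWire L (Fin.tail p) else layerWire L' (Fin.tail p))
      (T.path · (j + 1)) := by
    intro p
    refine Fin.consCases (fun b q => ?_) p
    cases b
    · simpa using hleft q
    · simpa using (hright q).mono hL'
  refine ⟨hpre.trans hL', hsel, fun x => ?_⟩
  have e₁ : energy x L' ≤ energy x t.1 + 1 := energy_addLayer_le_one x hG () fun _ _ => rfl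
  have e₂ : energy x L'' ≤ energy x L' + 1 := energy_andLayer_le_one hg' (fun _ => hnot.1) x
  have e₀ := henergy x
  change energy x L'' ≤ _
  omega

noncomputable def guards (T : DTree n) : (j : ℕ) → List (Gate n) × ((Fin j → Bool) → ℕ)
  | 0 => (baseNetlist n, fun _ => 1)
  | j + 1 => T.step j (T.guards j).2 (T.guards j).1

lemma guards_spec (T : DTree n) (j : ℕ) :
    baseNetlist n <+: (T.guards j).1 ∧ Selects (T.guards j).1 (T.guards j).2 (T.path · j) ∧
      ∀ x, 2 * energy x (T.guards j).1 ≤ j * (j + 5) := by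
  induction j with
  | zero =>
    refine ⟨List.prefix_rfl, fun p => computesAt_baseNetlist_one.congr fun x => ?_, fun x => ?_⟩
    · simp [Subsingleton.elim (T.path x 0) p]
    · simp [guards, energy_baseNetlist]
  | succ j ih =>
    obtain ⟨hpre, hsel, hen⟩ := ih
    obtain ⟨hpre', hsel', hen'⟩ := T.step_spec hpre hsel
    refine ⟨hpre.trans hpre', hsel', fun x => ?_⟩
    have := hen x
    have := hen' x
    simp only [guards] at *
    nlinarith

noncomputable def toNetlist (T : DTree n) : List (Gate n) × ℕ :=
  orTree T.depth (fun p => if (T.sub T.depth p).label then (T.guards T.depth).2 p else 0)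
    (T.guards T.depth).1

lemma toNetlist_spec (T : DTree n) :
    (∀ x, val x T.toNetlist.1 T.toNetlist.2 = T.eval x) ∧
      ∀ x, 2 * energy x T.toNetlist.1 ≤ T.depth * (T.depth + 7) := by
  obtain ⟨hpre, hsel, hen⟩ := T.guards_spec T.depth
  have hleaf : ∀ p, (T.sub T.depth p).depth = 0 := fun p => by
    have := T.depth_sub_le T.depth p
    omega
  have hw : ∀ p, ComputesAt (T.guards T.depth).1
      (if (T.sub T.depth p).label then (T.guards T.depth).2 p else 0)
      fun x => decide (T.path x T.depth = p) && (T.sub T.depth p).label := fun p => by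
    split_ifs with h
    · exact (hsel p).congr fun x => by simp [h]
    · exact (computesAt_baseNetlist_zero.mono hpre).congr fun x => by simp [h]
  refine ⟨fun x => ((computesAt_orTree hw).2 x).trans ?_, fun x => ?_⟩
  · rw [← T.eval_sub_path x T.depth, eval_eq_label (hleaf _)]
    simp
  · have := energy_orTree_le x (fun p => (hw p).1) (T.path x T.depth) fun p hp => by
      rw [(hw p).2 x, Bool.and_eq_true, decide_eq_true_eq] at hp
      exact hp.1.symm
    have := hen x
    unfold toNetlist
    nlinarith

def queryAll : List (Fin n) → ((Fin n → Bool) → Bool) → DTree n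
  | [], f => .leaf (f fun _ => false)
  | i :: l, f => .node i (queryAll l fun y => f (Function.update y i false))
      (queryAll l fun y => f (Function.update y i true))

lemma eval_queryAll (l : List (Fin n)) (f : (Fin n → Bool) → Bool) (x : Fin n → Bool) :
    (queryAll l f).eval x = f fun i => if i ∈ l then x i else false := by
  induction l generalizing f with
  | nil => rfl
  | cons i l ih =>
    have key : Function.update (fun k => if k ∈ l then x k else false) i (x i) =
        fun k => if k ∈ i :: l then x k else false := by
      funext k
      by_cases hk : k = i <;> simp [hk]
    simp only [queryAll, eval, ih, ← key]
    cases x i <;> rfl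

end DTree

lemma exists_dTree_depth_eq_Dcomp {n : ℕ} (f : (Fin n → Bool) → Bool) :
    ∃ T : DTree n, (∀ x, T.eval x = f x) ∧ T.depth = Dcomp f :=
  Nat.sInf_mem (s := {k | ∃ T : DTree n, (∀ x, T.eval x = f x) ∧ T.depth = k})
    ⟨_, DTree.queryAll (List.finRange n) f, fun x => by simp [DTree.eval_queryAll], rfl⟩

lemma two_mul_EC_le {n : ℕ} (f : (Fin n → Bool) → Bool) :
    2 * EC f ≤ Dcomp f * (Dcomp f + 7) := by
  obtain ⟨T, hT, hdepth⟩ := exists_dTree_depth_eq_Dcomp f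
  obtain ⟨hval, hen⟩ := T.toNetlist_spec
  have := EC_le_of_netlist T.toNetlist.1 T.toNetlist.2 (fun x => (hval x).trans (hT x))
    (k := Dcomp f * (Dcomp f + 7) / 2) fun x => by
      rw [Nat.le_div_iff_mul_le two_pos, mul_comm, ← hdepth]
      exact hen x
  omega

/-- There is a constant `c > 0` such that every Boolean function
`f : {0,1}^n → {0,1}` satisfies `EC(f) ≤ (1/2)·D(f)² + c·D(f)`. -/
theorem stmt2 : ∃ c : ℝ, 0 < c ∧ ∀ (n : ℕ) (f : (Fin n → Bool) → Bool),
    (EC f : ℝ) ≤ (1 / 2) * (Dcomp f : ℝ) ^ 2 + c * (Dcomp f : ℝ) := by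
  refine ⟨7 / 2, by norm_num, fun n f => ?_⟩
  have h : (2 * EC f : ℝ) ≤ Dcomp f * (Dcomp f + 7) := by exact_mod_cast two_mul_EC_le f
  linarith
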